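/- arXiv:2411.03352 — 7 statements merged into one kernel-verified Lean document; each statement's English description precedes it below -/
import Mathlib

section
/- If f(z) = Σ a_n z^n is analytic in the unit disk with |f(z)| ≤ 1, then Σ_{n=0}^∞ |a_n| r^n ≤ 1 for all 0 ≤ r ≤ 1/3. -/
/-!
For `n ≥ 1` the coefficients satisfy Wiener's inequality `‖aₙ‖ ≤ 1 - ‖a₀‖²`. For `n = 1` this is
the Schwarz lemma applied to `f` followed by the disc automorphism `w ↦ (w - a₀) / (1 - conj a₀ w)`.
For general `n`, the function `w ↦ Σₖ a_{nk} wᵏ` is again bounded by `1` on the disc, being the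
average of `f (ζʲ z)` over the `n`-th roots of unity `ζʲ`, where `zⁿ = w`; apply the case `n = 1`
to it. Hence for `r ≤ 1/3`,
`Σ ‖aₙ‖ rⁿ ≤ ‖a₀‖ + (1 - ‖a₀‖²) r / (1 - r) ≤ ‖a₀‖ + (1 - ‖a₀‖²) / 2 ≤ 1`.
-/

open Metric Set Complex ComplexConjugate Finset
open scoped NNReal

namespace Complex

lemma normSq_one_sub_conj_mul_sub_normSq_sub (α w : ℂ) :
    normSq (1 - conj α * w) - normSq (w - α) = (1 - normSq α) * (1 - normSq w) := by
  simp only [normSq_apply, sub_re, sub_im, mul_re, mul_im, conj_re, conj_im, one_re, one_im]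
  ring

lemma norm_sub_le_norm_one_sub_conj_mul {α w : ℂ} (hα : ‖α‖ ≤ 1) (hw : ‖w‖ ≤ 1) :
    ‖w - α‖ ≤ ‖1 - conj α * w‖ := by
  have key := normSq_one_sub_conj_mul_sub_normSq_sub α w
  simp only [normSq_eq_norm_sq] at key
  have hα2 : ‖α‖ ^ 2 ≤ 1 := pow_le_one₀ (norm_nonneg _) hα
  have hw2 : ‖w‖ ^ 2 ≤ 1 := pow_le_one₀ (norm_nonneg _) hw
  refine pow_le_pow_iff_left₀ (norm_nonneg _) (norm_nonneg _) two_ne_zero |>.1 ?_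
  nlinarith [mul_nonneg (sub_nonneg.2 hα2) (sub_nonneg.2 hw2)]

variable {f : ℂ → ℂ}

lemma deriv_eq_zero_of_norm_eq_one_of_mapsTo_ball (hd : DifferentiableOn ℂ f (ball 0 1))
    (hf : MapsTo f (ball 0 1) (closedBall 0 1)) (h₀ : ‖f 0‖ = 1) : deriv f 0 = 0 := by
  have hmem : ball (0 : ℂ) 1 ∈ nhds 0 := isOpen_ball.mem_nhds (mem_ball_self one_pos)
  have hmax : IsLocalMax (norm ∘ f) 0 := Filter.mem_of_superset hmem fun z hz => by
    simpa [h₀] using hf hz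
  have hconst := eventually_eq_of_isLocalMax_norm
    (Filter.mem_of_superset hmem fun z hz => hd.differentiableAt (isOpen_ball.mem_nhds hz)) hmax
  simpa using Filter.EventuallyEq.deriv_eq hconst

lemma norm_deriv_le_one_sub_sq_of_mapsTo_ball_of_norm_lt (hd : DifferentiableOn ℂ f (ball 0 1))
    (hf : MapsTo f (ball 0 1) (closedBall 0 1)) (h₀ : ‖f 0‖ < 1) :
    ‖deriv f 0‖ ≤ 1 - ‖f 0‖ ^ 2 := by
  set α := f 0
  have hden : ∀ z ∈ ball (0 : ℂ) 1, 1 - conj α * f z ≠ 0 := by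
    intro z hz h
    have : ‖conj α * f z‖ < 1 := by
      rw [norm_mul, RCLike.norm_conj]
      exact mul_lt_one_of_nonneg_of_lt_one_left (norm_nonneg _) h₀
        (mem_closedBall_zero_iff.1 (hf hz))
    rw [← sub_eq_zero.1 h, norm_one] at this
    exact this.false
  set g : ℂ → ℂ := fun z => (f z - α) / (1 - conj α * f z)
  have hgd : DifferentiableOn ℂ g (ball 0 1) :=
    (hd.sub_const α).div ((differentiableOn_const 1).sub (hd.const_mul _)) hden
  have hg : MapsTo g (ball 0 1) (closedBall (g 0) 1) := by
    intro z hz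
    simp only [g, α, sub_self, zero_div, mem_closedBall_zero_iff, norm_div]
    exact div_le_one_of_le₀
      (norm_sub_le_norm_one_sub_conj_mul h₀.le (mem_closedBall_zero_iff.1 (hf hz))) (norm_nonneg _)
  have hA : (0 : ℝ) < 1 - ‖α‖ ^ 2 := by nlinarith [norm_nonneg α]
  have hderiv : HasDerivAt g (deriv f 0 / (1 - ‖α‖ ^ 2 : ℝ)) 0 := by
    have hf' : HasDerivAt f (deriv f 0) 0 :=
      (hd.differentiableAt (isOpen_ball.mem_nhds (mem_ball_self one_pos))).hasDerivAt
    refine ((hf'.sub_const α).div ((hf'.const_mul (conj α)).const_sub 1)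
      (hden 0 (mem_ball_self one_pos))).congr_deriv ?_
    have hd0 : 1 - conj α * f 0 = ((1 - ‖α‖ ^ 2 : ℝ) : ℂ) := by
      rw [mul_comm, mul_conj, normSq_eq_norm_sq]
      push_cast
      rfl
    have hne : ((1 - ‖α‖ ^ 2 : ℝ) : ℂ) ≠ 0 := ofReal_ne_zero.2 hA.ne'
    rw [sub_self, zero_mul, sub_zero, hd0]
    field_simp
  have := norm_deriv_le_one_of_mapsTo_ball hgd hg one_pos
  rw [hderiv.deriv, norm_div, norm_real, Real.norm_of_nonneg hA.le, div_le_one hA] at this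
  exact this

theorem norm_deriv_le_one_sub_sq_of_mapsTo_ball (hd : DifferentiableOn ℂ f (ball 0 1))
    (hf : MapsTo f (ball 0 1) (closedBall 0 1)) : ‖deriv f 0‖ ≤ 1 - ‖f 0‖ ^ 2 := by
  rcases (mem_closedBall_zero_iff.1 (hf (mem_ball_self one_pos))).lt_or_eq with h₀ | h₀
  · exact norm_deriv_le_one_sub_sq_of_mapsTo_ball_of_norm_lt hd hf h₀
  · simp [deriv_eq_zero_of_norm_eq_one_of_mapsTo_ball hd hf h₀, h₀]

end Complex

theorem hasFPowerSeriesOnBall_ofScalars_of_hasSum {𝕜 : Type*} [RCLike 𝕜] {f : 𝕜 → 𝕜}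
    {a : ℕ → 𝕜} {R : ℝ≥0} (hR : 0 < R)
    (hsum : ∀ z ∈ ball (0 : 𝕜) R, HasSum (fun n => a n * z ^ n) (f z)) :
    HasFPowerSeriesOnBall f (FormalMultilinearSeries.ofScalars 𝕜 a) 0 R where
  r_le := by
    refine ENNReal.le_of_forall_nnreal_lt fun r hr => ?_
    have hr' : ((r : ℝ) : 𝕜) ∈ ball (0 : 𝕜) R := by
      simpa [RCLike.norm_ofReal] using hr
    obtain ⟨C, hC⟩ := (hsum _ hr').summable.tendsto_atTop_zero.norm.bddAbove_range
    refine FormalMultilinearSeries.le_radius_of_bound _ C fun n => ?_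
    simpa [FormalMultilinearSeries.ofScalars_norm, RCLike.norm_ofReal] using hC ⟨n, rfl⟩
  r_pos := by exact_mod_cast hR
  hasSum {y} hy := by
    simpa [FormalMultilinearSeries.ofScalars_apply_eq, mul_comm] using hsum y (by
      rwa [← Metric.eball_coe])

variable {f : ℂ → ℂ} {a : ℕ → ℂ}

lemma norm_coeff_one_le_one_sub_sq
    (hsum : ∀ z ∈ ball (0 : ℂ) 1, HasSum (fun n => a n * z ^ n) (f z))
    (hb : ∀ z ∈ ball (0 : ℂ) 1, ‖f z‖ ≤ 1) : ‖a 1‖ ≤ 1 - ‖a 0‖ ^ 2 := by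
  have hp := hasFPowerSeriesOnBall_ofScalars_of_hasSum (f := f) (R := 1) one_pos
    (by simpa using hsum)
  have hd : DifferentiableOn ℂ f (ball 0 1) := by
    simpa only [Metric.eball_coe, NNReal.coe_one] using hp.differentiableOn
  have h₀ : f 0 = a 0 := by simpa using (hp.coeff_zero fun _ => 0).symm
  have h₁ : deriv f 0 = a 1 := by simpa using hp.hasFPowerSeriesAt.deriv
  simpa [h₀, h₁] using Complex.norm_deriv_le_one_sub_sq_of_mapsTo_ball hd
    fun z hz => mem_closedBall_zero_iff.2 (hb z hz)

theorem IsPrimitiveRoot.sum_range_pow_pow_eq_ite {R : Type*} [CommRing R] [IsDomain R] {ζ : R}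
    {n : ℕ} (hζ : IsPrimitiveRoot ζ n) (m : ℕ) :
    ∑ j ∈ range n, (ζ ^ m) ^ j = if n ∣ m then (n : R) else 0 := by
  split_ifs with h
  · simp [(hζ.pow_eq_one_iff_dvd m).2 h]
  · have hprod : (∑ j ∈ range n, (ζ ^ m) ^ j) * (ζ ^ m - 1) = 0 := by
      rw [geom_sum_mul, ← pow_mul, mul_comm, pow_mul, hζ.pow_eq_one, one_pow, sub_self]
    exact (mul_eq_zero.1 hprod).resolve_right
      (sub_ne_zero.2 (mt (hζ.pow_eq_one_iff_dvd m).1 h))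

theorem hasSum_coeff_mul_mul_pow_of_isPrimitiveRoot {K : Type*} [Field K] [CharZero K]
    [TopologicalSpace K] [IsTopologicalRing K] {g : K → K} {a : ℕ → K} {ζ z : K} {n : ℕ}
    (hζ : IsPrimitiveRoot ζ n) (hn : n ≠ 0)
    (hsum : ∀ j < n, HasSum (fun m => a m * (ζ ^ j * z) ^ m) (g (ζ ^ j * z))) :
    HasSum (fun k => a (n * k) * (z ^ n) ^ k) ((n : K)⁻¹ * ∑ j ∈ range n, g (ζ ^ j * z)) := by
  have h := (hasSum_sum fun j hj => hsum j (mem_range.1 hj)).mul_left (n : K)⁻¹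
  have hfilter : ∀ m, (n : K)⁻¹ * ∑ j ∈ range n, a m * (ζ ^ j * z) ^ m =
      if n ∣ m then a m * z ^ m else 0 := by
    intro m
    have hterm : ∀ j, a m * (ζ ^ j * z) ^ m = a m * z ^ m * (ζ ^ m) ^ j := fun j => by ring
    rw [sum_congr rfl fun j _ => hterm j, ← mul_sum, hζ.sum_range_pow_pow_eq_ite]
    split_ifs
    · field_simp
    · simp
  simp_rw [hfilter] at h
  rw [← (mul_right_injective₀ hn).hasSum_iff] at h
  · simpa [Function.comp_def, pow_mul] using h
  · rintro m hm
    rw [if_neg]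
    rintro ⟨k, rfl⟩
    exact hm ⟨k, rfl⟩

theorem norm_coeff_le_one_sub_sq
    (hsum : ∀ z ∈ ball (0 : ℂ) 1, HasSum (fun n => a n * z ^ n) (f z))
    (hb : ∀ z ∈ ball (0 : ℂ) 1, ‖f z‖ ≤ 1) {n : ℕ} (hn : n ≠ 0) : ‖a n‖ ≤ 1 - ‖a 0‖ ^ 2 := by
  obtain ⟨ζ, hζ⟩ : ∃ ζ : ℂ, IsPrimitiveRoot ζ n := ⟨_, Complex.isPrimitiveRoot_exp n hn⟩
  have hsection : ∀ w ∈ ball (0 : ℂ) 1,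
      ∃ S, HasSum (fun k => a (n * k) * w ^ k) S ∧ ‖S‖ ≤ 1 := by
    intro w hw
    obtain ⟨z, rfl⟩ := IsAlgClosed.exists_pow_nat_eq w (Nat.pos_of_ne_zero hn)
    have hz : ∀ j, ζ ^ j * z ∈ ball (0 : ℂ) 1 := fun j => by
      rw [mem_ball_zero_iff, norm_mul, norm_pow, hζ.norm'_eq_one hn, one_pow, one_mul]
      rw [mem_ball_zero_iff, norm_pow] at hw
      exact (pow_lt_one_iff_of_nonneg (norm_nonneg z) hn).1 hw
    refine ⟨_, hasSum_coeff_mul_mul_pow_of_isPrimitiveRoot hζ hn fun j _ => hsum _ (hz j), ?_⟩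
    calc ‖(n : ℂ)⁻¹ * ∑ j ∈ range n, f (ζ ^ j * z)‖
        ≤ (n : ℝ)⁻¹ * ∑ j ∈ range n, ‖f (ζ ^ j * z)‖ := by
          rw [norm_mul, norm_inv, norm_natCast]
          gcongr
          exact norm_sum_le _ _
      _ ≤ (n : ℝ)⁻¹ * ∑ j ∈ range n, 1 := by gcongr with j; exact hb _ (hz j)
      _ = 1 := by simp [hn]
  choose! F hF using hsection
  simpa using norm_coeff_one_le_one_sub_sq (fun w hw => (hF w hw).1) fun w hw => (hF w hw).2

theorem tsum_mul_pow_le_one_of_le_one_sub_sq {c : ℕ → ℝ} (hc : ∀ n, 0 ≤ c n)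
    (hc' : ∀ n, c (n + 1) ≤ 1 - c 0 ^ 2) {r : ℝ} (hr₀ : 0 ≤ r) (hr : r ≤ 1 / 3) :
    ∑' n, c n * r ^ n ≤ 1 := by
  have hA : 0 ≤ 1 - c 0 ^ 2 := (hc 1).trans (hc' 0)
  have hr₁ : r < 1 := by linarith
  have hgeom := (hasSum_geometric_of_lt_one hr₀ hr₁).mul_left ((1 - c 0 ^ 2) * r)
  have hle : ∀ n, c (n + 1) * r ^ (n + 1) ≤ (1 - c 0 ^ 2) * r * r ^ n := fun n => by
    rw [pow_succ', ← mul_assoc]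
    exact mul_le_mul_of_nonneg_right (mul_le_mul_of_nonneg_right (hc' n) hr₀) (pow_nonneg hr₀ n)
  have htail : Summable fun n => c (n + 1) * r ^ (n + 1) :=
    hgeom.summable.of_nonneg_of_le (fun n => mul_nonneg (hc _) (pow_nonneg hr₀ _)) hle
  have hratio : r * (1 - r)⁻¹ ≤ 1 / 2 := by
    rw [← div_eq_mul_inv, div_le_iff₀ (by linarith)]
    linarith
  calc ∑' n, c n * r ^ n = c 0 + ∑' n, c (n + 1) * r ^ (n + 1) := by
        rw [((summable_nat_add_iff (f := fun n => c n * r ^ n) 1).1 htail).tsum_eq_zero_add,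
          pow_zero, mul_one]
    _ ≤ c 0 + (1 - c 0 ^ 2) * r * (1 - r)⁻¹ := by
        linarith [Summable.tsum_le_tsum hle htail hgeom.summable, hgeom.tsum_eq]
    _ ≤ 1 := by nlinarith [mul_le_mul_of_nonneg_left hratio hA, sq_nonneg (1 - c 0)]

/-- Classical Bohr inequality: if `f(z) = Σ aₙ zⁿ` on the unit disk with `|f| ≤ 1`,
then `Σ |aₙ| rⁿ ≤ 1` for `0 ≤ r ≤ 1/3`. -/
theorem bohr_inequality (f : ℂ → ℂ) (a : ℕ → ℂ)
    (hsum : ∀ z ∈ Metric.ball (0 : ℂ) 1, HasSum (fun n => a n * z ^ n) (f z))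
    (hb : ∀ z ∈ Metric.ball (0 : ℂ) 1, ‖f z‖ ≤ 1) :
    ∀ r : ℝ, 0 ≤ r → r ≤ 1 / 3 → ∑' n : ℕ, ‖a n‖ * r ^ n ≤ 1 := fun _ hr₀ hr =>
  tsum_mul_pow_le_one_of_le_one_sub_sq (fun _ => norm_nonneg _)
    (fun n => norm_coeff_le_one_sub_sq hsum hb n.succ_ne_zero) hr₀ hr
end

section
/- If f(z) = Σ a_n z^n is analytic in 𝔻 with |f(z)| ≤ 1, then |a_n| ≤ 1 - |a_0|^2 for every n ≥ 1. -/
/-!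
Averaging `f` over the rotations `z ↦ ζᵏ z` by the `n`-th roots of unity keeps exactly the terms
whose index is divisible by `n`, so `g(w) = ∑ⱼ a_{nj} wʲ` (where `w = zⁿ`) again maps the disk
into the closed disk, with `g(0) = a₀` and `g'(0) = aₙ`. The Schwarz–Pick inequality
`|g'(0)| ≤ 1 - |g(0)|²`, which is the Schwarz lemma applied to `g` followed by the Blaschke factor
sending `g(0)` to `0`, gives the bound.
-/

open Metric Set Finset ComplexConjugate NNReal

theorem IsPrimitiveRoot.sum_pow_pow_eq_ite {R : Type*} [CommRing R] [IsDomain R] {ζ : R} {n : ℕ}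
    (hζ : IsPrimitiveRoot ζ n) (m : ℕ) :
    ∑ k ∈ range n, (ζ ^ k) ^ m = if n ∣ m then (n : R) else 0 := by
  simp_rw [← pow_mul, mul_comm _ m, pow_mul]
  split_ifs with hm
  · simp [(hζ.pow_eq_one_iff_dvd m).2 hm]
  · have hne : ζ ^ m - 1 ≠ 0 := sub_ne_zero.2 fun h => hm ((hζ.pow_eq_one_iff_dvd m).1 h)
    refine (mul_eq_zero.1 ?_).resolve_right hne
    rw [geom_sum_mul, ← pow_mul, mul_comm, pow_mul, hζ.pow_eq_one, one_pow, sub_self]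

theorem hasSum_comp_mul_mul_pow_of_rotations {𝕜 : Type*} [Field 𝕜] [CharZero 𝕜]
    [TopologicalSpace 𝕜] [IsTopologicalRing 𝕜] {a : ℕ → 𝕜} {s : ℕ → 𝕜} {ζ z : 𝕜} {n : ℕ}
    (hζ : IsPrimitiveRoot ζ n) (hn : n ≠ 0)
    (hs : ∀ k ∈ range n, HasSum (fun m => a m * (ζ ^ k * z) ^ m) (s k)) :
    HasSum (fun j => a (n * j) * (z ^ n) ^ j) ((n : 𝕜)⁻¹ * ∑ k ∈ range n, s k) := by
  have hsum : HasSum (fun m => (if n ∣ m then (n : 𝕜) else 0) * (a m * z ^ m))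
      (∑ k ∈ range n, s k) := by
    convert hasSum_sum hs using 2 with m
    simp_rw [← hζ.sum_pow_pow_eq_ite m, Finset.sum_mul, mul_pow]
    exact Finset.sum_congr rfl fun k _ => by ring
  have hsupp : ∀ m ∉ Set.range (n * ·), (if n ∣ m then (n : 𝕜) else 0) * (a m * z ^ m) = 0 :=
    fun m hm => by rw [if_neg fun ⟨j, hj⟩ => hm ⟨j, hj.symm⟩, zero_mul]
  have hsub := ((mul_right_injective₀ hn).hasSum_iff hsupp).2 hsum
  refine (hsub.mul_left (n : 𝕜)⁻¹).congr_fun fun j => ?_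
  rw [Function.comp_apply, if_pos (dvd_mul_right n j), ← mul_assoc,
    inv_mul_cancel₀ (by exact_mod_cast hn), one_mul, pow_mul]

noncomputable def blaschkeFactor (b w : ℂ) : ℂ := (w - b) / (1 - conj b * w)

lemma normSq_one_sub_conj_mul_sub_normSq_sub (b w : ℂ) :
    Complex.normSq (1 - conj b * w) - Complex.normSq (w - b) =
      (1 - Complex.normSq b) * (1 - Complex.normSq w) := by
  simp only [Complex.normSq_apply, Complex.sub_re, Complex.sub_im, Complex.mul_re, Complex.mul_im,
    Complex.one_re, Complex.one_im, Complex.conj_re, Complex.conj_im]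
  ring

section blaschkeFactor

variable {b w : ℂ}

lemma one_sub_conj_mul_ne_zero (hb : ‖b‖ < 1) (hw : ‖w‖ ≤ 1) : 1 - conj b * w ≠ 0 := by
  have hlt : ‖conj b * w‖ < 1 := by
    rw [norm_mul, Complex.norm_conj]
    nlinarith [norm_nonneg b, norm_nonneg w]
  intro h
  rw [← sub_eq_zero.1 h, norm_one] at hlt
  exact hlt.false

lemma blaschkeFactor_self : blaschkeFactor b b = 0 := by
  simp [blaschkeFactor]

lemma norm_blaschkeFactor_le_one (hb : ‖b‖ < 1) (hw : ‖w‖ ≤ 1) : ‖blaschkeFactor b w‖ ≤ 1 := by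
  have hden := one_sub_conj_mul_ne_zero hb hw
  rw [blaschkeFactor, norm_div, div_le_one (norm_pos_iff.2 hden), Complex.norm_def,
    Complex.norm_def]
  refine Real.sqrt_le_sqrt (sub_nonneg.1 ?_)
  rw [normSq_one_sub_conj_mul_sub_normSq_sub, ← Complex.sq_norm, ← Complex.sq_norm]
  exact mul_nonneg (by nlinarith [norm_nonneg b]) (by nlinarith [norm_nonneg w])

lemma differentiableAt_blaschkeFactor (hb : ‖b‖ < 1) (hw : ‖w‖ ≤ 1) :
    DifferentiableAt ℂ (blaschkeFactor b) w :=
  (differentiableAt_id.sub_const b).div ((differentiableAt_id.const_mul _).const_sub 1)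
    (one_sub_conj_mul_ne_zero hb hw)

lemma hasDerivAt_blaschkeFactor_self (hb : ‖b‖ < 1) :
    HasDerivAt (blaschkeFactor b) (((1 - ‖b‖ ^ 2)⁻¹ : ℝ) : ℂ) b := by
  have hden := one_sub_conj_mul_ne_zero hb hb.le
  have h : HasDerivAt (blaschkeFactor b) _ b := ((hasDerivAt_id' b).sub_const b).div
    (((hasDerivAt_id' b).const_mul (conj b)).const_sub 1) hden
  refine h.congr_deriv ?_
  rw [Complex.conj_mul'] at hden ⊢
  push_cast
  field_simp
  ring

end blaschkeFactor

theorem norm_deriv_le_one_sub_sq_norm {g : ℂ → ℂ} {c : ℂ} (hd : DifferentiableOn ℂ g (ball c 1))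
    (hmaps : MapsTo g (ball c 1) (closedBall 0 1)) : ‖deriv g c‖ ≤ 1 - ‖g c‖ ^ 2 := by
  have hc : c ∈ ball c 1 := mem_ball_self one_pos
  have hg_le : ∀ z ∈ ball c 1, ‖g z‖ ≤ 1 := fun z hz => by simpa using hmaps hz
  rcases (hg_le c hc).lt_or_eq with hlt | heq
  · have hgc : HasDerivAt g (deriv g c) c :=
      (hd.differentiableAt (isOpen_ball.mem_nhds hc)).hasDerivAt
    have hφ : HasDerivAt (blaschkeFactor (g c) ∘ g)
        ((((1 - ‖g c‖ ^ 2)⁻¹ : ℝ) : ℂ) * deriv g c) c :=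
      (hasDerivAt_blaschkeFactor_self hlt).comp c hgc
    have hφd : DifferentiableOn ℂ (blaschkeFactor (g c) ∘ g) (ball c 1) := fun z hz =>
      (differentiableAt_blaschkeFactor hlt (hg_le z hz)).comp_differentiableWithinAt z (hd z hz)
    have hφmaps : MapsTo (blaschkeFactor (g c) ∘ g) (ball c 1)
        (closedBall ((blaschkeFactor (g c) ∘ g) c) 1) := fun z hz => by
      simpa [blaschkeFactor_self] using norm_blaschkeFactor_le_one hlt (hg_le z hz)
    have hpos : 0 < 1 - ‖g c‖ ^ 2 := by nlinarith [norm_nonneg (g c)]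
    have h1 := Complex.norm_deriv_le_one_of_mapsTo_ball hφd hφmaps one_pos
    rwa [hφ.deriv, norm_mul, Complex.norm_real, Real.norm_of_nonneg (inv_nonneg.2 hpos.le),
      inv_mul_le_iff₀ hpos, mul_one] at h1
  · have hconst : EqOn g (fun _ => g c) (ball c 1) :=
      Complex.eqOn_of_isPreconnected_of_isMaxOn_norm (convex_ball c 1).isPreconnected
        isOpen_ball hd hc fun z hz => by simpa [← heq] using hg_le z hz
    rw [(Filter.eventuallyEq_of_mem (isOpen_ball.mem_nhds hc) hconst).deriv_eq, deriv_const, heq]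
    norm_num

theorem hasFPowerSeriesOnBall_ofScalars_of_hasSum_s1 {c : ℕ → ℂ} {g : ℂ → ℂ} {r : ℝ≥0} (hr : 0 < r)
    (hc : ∀ w ∈ ball (0 : ℂ) r, HasSum (fun j => c j * w ^ j) (g w)) :
    HasFPowerSeriesOnBall g (FormalMultilinearSeries.ofScalars ℂ c) 0 r := by
  refine ⟨ENNReal.le_of_forall_nnreal_lt fun t ht => ?_, by exact_mod_cast hr, fun {y} hy => ?_⟩
  · have htr : ((t : ℝ) : ℂ) ∈ ball (0 : ℂ) r := by simpa using ht
    refine FormalMultilinearSeries.le_radius_of_tendsto _ (l := 0) ?_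
    simpa [FormalMultilinearSeries.ofScalars_norm] using
      (hc _ htr).summable.tendsto_atTop_zero.norm
  · have hy' : y ∈ ball (0 : ℂ) r := by simpa using hy
    simpa [FormalMultilinearSeries.ofScalars_apply_eq, mul_comm] using hc y hy'

theorem norm_coeff_one_le_one_sub_sq_s1 {c : ℕ → ℂ} {g : ℂ → ℂ}
    (hc : ∀ w ∈ ball (0 : ℂ) 1, HasSum (fun j => c j * w ^ j) (g w))
    (hg : ∀ w ∈ ball (0 : ℂ) 1, ‖g w‖ ≤ 1) : ‖c 1‖ ≤ 1 - ‖c 0‖ ^ 2 := by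
  have hp := hasFPowerSeriesOnBall_ofScalars_of_hasSum_s1 one_pos (by simpa using hc)
  have hd : DifferentiableOn ℂ g (ball 0 1) := by
    simpa only [Metric.eball_coe, NNReal.coe_one] using hp.analyticOnNhd.differentiableOn
  have h := norm_deriv_le_one_sub_sq_norm hd fun w hw => by simpa using hg w hw
  rw [hp.hasFPowerSeriesAt.deriv, ← hp.coeff_zero fun _ => 1] at h
  simpa [FormalMultilinearSeries.ofScalars_apply_eq] using h

theorem exists_hasSum_comp_mul_mul_pow_norm_le_one {f : ℂ → ℂ} {a : ℕ → ℂ} {n : ℕ} (hn : n ≠ 0)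
    (hsum : ∀ z ∈ ball (0 : ℂ) 1, HasSum (fun m => a m * z ^ m) (f z))
    (hb : ∀ z ∈ ball (0 : ℂ) 1, ‖f z‖ ≤ 1) {w : ℂ} (hw : w ∈ ball (0 : ℂ) 1) :
    ∃ s, HasSum (fun j => a (n * j) * w ^ j) s ∧ ‖s‖ ≤ 1 := by
  obtain ⟨z, rfl⟩ := IsAlgClosed.exists_pow_nat_eq w (Nat.pos_of_ne_zero hn)
  obtain ⟨ζ, hζ⟩ : ∃ ζ : ℂ, IsPrimitiveRoot ζ n := ⟨_, Complex.isPrimitiveRoot_exp n hn⟩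
  have hrot : ∀ k : ℕ, ζ ^ k * z ∈ ball (0 : ℂ) 1 := by
    intro k
    rw [mem_ball_zero_iff, norm_mul, norm_pow, hζ.norm'_eq_one hn, one_pow, one_mul]
    rw [mem_ball_zero_iff, norm_pow] at hw
    exact (pow_lt_one_iff_of_nonneg (norm_nonneg z) hn).1 hw
  refine ⟨_, hasSum_comp_mul_mul_pow_of_rotations hζ hn fun k _ => hsum _ (hrot k), ?_⟩
  calc ‖(n : ℂ)⁻¹ * ∑ k ∈ range n, f (ζ ^ k * z)‖
      ≤ (n : ℝ)⁻¹ * ∑ _k ∈ range n, (1 : ℝ) := by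
        rw [norm_mul, norm_inv, Complex.norm_natCast]
        gcongr
        exact norm_sum_le_of_le _ fun k _ => hb _ (hrot k)
    _ = 1 := by simp [hn]

/-- If `f(z) = Σ aₙ zⁿ` is analytic on the unit disk with `|f| ≤ 1`,
then `|aₙ| ≤ 1 - |a₀|²` for all `n ≥ 1`. -/
theorem coeff_bound (f : ℂ → ℂ) (a : ℕ → ℂ)
    (hsum : ∀ z ∈ Metric.ball (0 : ℂ) 1, HasSum (fun n => a n * z ^ n) (f z))
    (hb : ∀ z ∈ Metric.ball (0 : ℂ) 1, ‖f z‖ ≤ 1) :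
    ∀ n : ℕ, 1 ≤ n → ‖a n‖ ≤ 1 - ‖a 0‖ ^ 2 := by
  intro n hn
  choose! g hg hgb using fun w (hw : w ∈ ball (0 : ℂ) 1) =>
    exists_hasSum_comp_mul_mul_pow_norm_le_one (Nat.one_le_iff_ne_zero.1 hn) hsum hb hw
  simpa using norm_coeff_one_le_one_sub_sq_s1 hg hgb
end

section
/- The polynomial 2ρ^4 + 5ρ^3 + 5ρ^2 + 5ρ - 1 has a unique root R_1 in (0, √2 - 1), and R_1 ≈ 0.1671. -/
/-- The polynomial `2ρ⁴ + 5ρ³ + 5ρ² + 5ρ - 1` has a unique root `R₁` in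
`(0, √2 - 1)`, with `R₁ ≈ 0.1671`. -/
theorem radius_poly1 :
    (∃! r : ℝ, r ∈ Set.Ioo 0 (Real.sqrt 2 - 1) ∧
      2 * r ^ 4 + 5 * r ^ 3 + 5 * r ^ 2 + 5 * r - 1 = 0) ∧
    ∀ r : ℝ, r ∈ Set.Ioo 0 (Real.sqrt 2 - 1) →
      2 * r ^ 4 + 5 * r ^ 3 + 5 * r ^ 2 + 5 * r - 1 = 0 →
      |r - 0.1671| < 0.001 := by
  have hs : (1.168 : ℝ) < Real.sqrt 2 := by
    have h2 : Real.sqrt 2 ^ 2 = 2 := Real.sq_sqrt (by norm_num)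
    nlinarith [Real.sqrt_nonneg 2]
  set f : ℝ → ℝ := fun r => 2 * r ^ 4 + 5 * r ^ 3 + 5 * r ^ 2 + 5 * r - 1 with hf
  have hmono : ∀ a b : ℝ, 0 ≤ a → a < b → f a < f b := by
    intro a b ha hab
    simp only [hf]
    have h4 : a ^ 4 < b ^ 4 := pow_lt_pow_left₀ hab ha (by norm_num)
    have h3 : a ^ 3 < b ^ 3 := pow_lt_pow_left₀ hab ha (by norm_num)
    have h2 : a ^ 2 < b ^ 2 := pow_lt_pow_left₀ hab ha (by norm_num)
    linarith
  -- key bounds: any root in (0, √2-1) lies in (0.167, 0.168)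
  have hbound : ∀ r : ℝ, 0 < r → f r = 0 → 0.167 < r ∧ r < 0.168 := by
    intro r hr hfr
    constructor
    · by_contra h
      push_neg at h
      rcases eq_or_lt_of_le h with h' | h'
      · rw [h'] at hfr; norm_num [hf] at hfr
      · have := hmono r 0.167 hr.le h'
        rw [hfr] at this
        norm_num [hf] at this
    · by_contra h
      push_neg at h
      rcases eq_or_lt_of_le h with h' | h'
      · rw [← h'] at hfr; norm_num [hf] at hfr
      · have := hmono 0.168 r (by norm_num) h'
        rw [hfr] at this
        norm_num [hf] at this
  -- existence
  have hcont : ContinuousOn f (Set.Icc 0.167 0.168) := by fun_prop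
  have hiv : Set.Ioo (f 0.167) (f 0.168) ⊆ f '' Set.Ioo 0.167 0.168 :=
    intermediate_value_Ioo (by norm_num) hcont
  have h0 : (0 : ℝ) ∈ Set.Ioo (f 0.167) (f 0.168) := by
    constructor <;> norm_num [hf]
  obtain ⟨r, hr, hfr⟩ := hiv h0
  have hrmem : r ∈ Set.Ioo 0 (Real.sqrt 2 - 1) := by
    constructor
    · linarith [hr.1]
    · linarith [hr.2]
  refine ⟨⟨r, ⟨hrmem, hfr⟩, ?_⟩, ?_⟩
  · rintro y ⟨hy, hfy'⟩
    have hfy : f y = 0 := hfy'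
    rcases lt_trichotomy y r with h | h | h
    · have := hmono y r hy.1.le h
      rw [hfy, hfr] at this; exact absurd this (lt_irrefl 0)
    · exact h
    · have := hmono r y (by linarith [hr.1] : (0:ℝ) ≤ r) h
      rw [hfy, hfr] at this; exact absurd this (lt_irrefl 0)
  · intro x hx hfx
    obtain ⟨h1, h2⟩ := hbound x hx.1 hfx
    rw [abs_lt]
    constructor <;> linarith
end

section
/- The polynomial ρ^4 + 2ρ^3 + 3ρ^2 + 3ρ - 1 has a unique root R_1 in (0, (√5-1)/2), and R_1 ≈ 0.255508. -/
private lemma poly_inj : ∀ a b : ℝ, 0 < a → 0 < b →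
    a ^ 4 + 2 * a ^ 3 + 3 * a ^ 2 + 3 * a - 1 = 0 →
    b ^ 4 + 2 * b ^ 3 + 3 * b ^ 2 + 3 * b - 1 = 0 → a = b := by
  intro a b ha hb hfa hfb
  have key : (b - a) * ((a^3 + a^2*b + a*b^2 + b^3) + 2*(a^2 + a*b + b^2) + 3*(a + b) + 3) = 0 := by
    linear_combination hfb - hfa
  have hpos : (a^3 + a^2*b + a*b^2 + b^3) + 2*(a^2 + a*b + b^2) + 3*(a + b) + 3 > 0 := by positivity
  have := mul_eq_zero.mp key
  rcases this with h | h
  · linarith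
  · linarith

private lemma exists_root : ∃ r : ℝ, r ∈ Set.Icc (0.2555 : ℝ) 0.25551 ∧
    r ^ 4 + 2 * r ^ 3 + 3 * r ^ 2 + 3 * r - 1 = 0 := by
  have hc : ContinuousOn (fun r : ℝ => r ^ 4 + 2 * r ^ 3 + 3 * r ^ 2 + 3 * r - 1)
      (Set.Icc (0.2555 : ℝ) 0.25551) := by fun_prop
  have h := intermediate_value_Icc (by norm_num : (0.2555 : ℝ) ≤ 0.25551) hc
  have hmem : (0 : ℝ) ∈ Set.Icc ((0.2555:ℝ) ^ 4 + 2 * 0.2555 ^ 3 + 3 * 0.2555 ^ 2 + 3 * 0.2555 - 1)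
      ((0.25551:ℝ) ^ 4 + 2 * 0.25551 ^ 3 + 3 * 0.25551 ^ 2 + 3 * 0.25551 - 1) := by
    constructor <;> norm_num
  obtain ⟨r, hr, hr0⟩ := h hmem
  exact ⟨r, hr, hr0⟩

private lemma sqrt5_lb : (0.6 : ℝ) < (Real.sqrt 5 - 1) / 2 := by
  have : (2.2 : ℝ) < Real.sqrt 5 := by
    have := Real.sq_sqrt (by norm_num : (5:ℝ) ≥ 0)
    nlinarith [Real.sqrt_nonneg 5]
  linarith

/-- The polynomial `ρ⁴ + 2ρ³ + 3ρ² + 3ρ - 1` has a unique root `R₁` in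
`(0, (√5-1)/2)`, with `R₁ ≈ 0.255508`. -/
theorem radius_poly2 :
    (∃! r : ℝ, r ∈ Set.Ioo 0 ((Real.sqrt 5 - 1) / 2) ∧
      r ^ 4 + 2 * r ^ 3 + 3 * r ^ 2 + 3 * r - 1 = 0) ∧
    ∀ r : ℝ, r ∈ Set.Ioo 0 ((Real.sqrt 5 - 1) / 2) →
      r ^ 4 + 2 * r ^ 3 + 3 * r ^ 2 + 3 * r - 1 = 0 →
      |r - 0.255508| < 0.00001 := by
  obtain ⟨r, ⟨hr1, hr2⟩, hroot⟩ := exists_root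
  have hrpos : (0:ℝ) < r := by linarith
  have hrlt : r < (Real.sqrt 5 - 1) / 2 := lt_of_le_of_lt (by linarith) sqrt5_lb
  constructor
  · exact ⟨r, ⟨⟨hrpos, hrlt⟩, hroot⟩, fun s ⟨⟨hs1, _⟩, hs⟩ => poly_inj s r hs1 hrpos hs hroot⟩
  · intro s ⟨hs1, _⟩ hs
    have := poly_inj s r hs1 hrpos hs hroot
    rw [this, abs_lt]
    constructor <;> linarith
end

section
/- For fixed k ∈ [0,1), the function G_6(ρ) = (2ρ^4 + 3ρ^3 + ρ^2 + 3ρ - 1)/((1+ρ)^2(1-ρ)) + 2k(ρ/(1-ρ) + log(1-ρ)) satisfies G_6(0) = -1 < 0, G_6(1/3) > 0, and G_6'(ρ) ≥ 0 on [0, 1/3]; hence G_6 has a unique root in (0, 1/3). -/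
/-!
`G₆` is a rational function plus `2k (ρ/(1-ρ) + log(1-ρ))`. The logarithmic part is
`log x - (1 - 1/x) ≥ 0` at `x = 1 - ρ` and has derivative `ρ/(1-ρ)²`; the derivative of the
rational part has numerator `-2ρ⁶ - 4ρ⁵ + 4ρ⁴ + 20ρ³ + 10ρ² + 4 ≥ 4` on `[0, 1]`. Hence `G₆` is
strictly increasing on `[0, 1)`, and since `G₆(0) = -1` and `G₆(1/3) ≥ 5/24`, the intermediate
value theorem gives exactly one root in `(0, 1/3)`.
-/

open Real Set

theorem StrictMonoOn.existsUnique_mem_Ioo_eq {α δ : Type*} [ConditionallyCompleteLinearOrder α]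
    [TopologicalSpace α] [OrderTopology α] [DenselyOrdered α] [LinearOrder δ]
    [TopologicalSpace δ] [OrderClosedTopology δ] {f : α → δ} {a b : α} {c : δ} (hab : a ≤ b)
    (hmono : StrictMonoOn f (Icc a b)) (hcont : ContinuousOn f (Icc a b))
    (hc : c ∈ Ioo (f a) (f b)) :
    ∃! x, x ∈ Ioo a b ∧ f x = c := by
  obtain ⟨x, hx, hfx⟩ := intermediate_value_Ioo hab hcont hc
  exact ⟨x, ⟨hx, hfx⟩, fun y ⟨hy, hfy⟩ =>
    hmono.injOn (Ioo_subset_Icc_self hy) (Ioo_subset_Icc_self hx) (hfy.trans hfx.symm)⟩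

theorem hasDerivAt_div_one_sub_add_log_one_sub {x : ℝ} (hx : x < 1) :
    HasDerivAt (fun y => y / (1 - y) + log (1 - y)) (x / (1 - x) ^ 2) x := by
  have hne : 1 - x ≠ 0 := by linarith
  have hsub : HasDerivAt (fun y : ℝ => 1 - y) (-1) x := by
    simpa using (hasDerivAt_id x).const_sub 1
  refine (((hasDerivAt_id x).div hsub hne).add (hsub.log hne)).congr_deriv ?_
  simp only [id]
  field_simp
  ring

theorem div_one_sub_add_log_one_sub_nonneg {x : ℝ} (hx : x < 1) :
    0 ≤ x / (1 - x) + log (1 - x) := by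
  have hpos : 0 < 1 - x := by linarith
  have h := one_sub_inv_le_log_of_pos hpos
  have : 1 - (1 - x)⁻¹ = -(x / (1 - x)) := by field_simp; ring
  linarith

noncomputable def G6 (k ρ : ℝ) : ℝ :=
  (2 * ρ ^ 4 + 3 * ρ ^ 3 + ρ ^ 2 + 3 * ρ - 1) / ((1 + ρ) ^ 2 * (1 - ρ))
    + 2 * k * (ρ / (1 - ρ) + log (1 - ρ))

theorem hasDerivAt_G6 (k : ℝ) {ρ : ℝ} (hρ : ρ ≠ -1) (hρ' : ρ < 1) :
    HasDerivAt (G6 k)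
      ((-2 * ρ ^ 6 - 4 * ρ ^ 5 + 4 * ρ ^ 4 + 20 * ρ ^ 3 + 10 * ρ ^ 2 + 4)
          / ((1 + ρ) ^ 2 * (1 - ρ)) ^ 2 + 2 * k * (ρ / (1 - ρ) ^ 2)) ρ := by
  have h₁ : 1 + ρ ≠ 0 := fun h => hρ (by linarith)
  have h₂ : 1 - ρ ≠ 0 := by linarith
  have hnum : HasDerivAt (fun x : ℝ => 2 * x ^ 4 + 3 * x ^ 3 + x ^ 2 + 3 * x - 1)
      (8 * ρ ^ 3 + 9 * ρ ^ 2 + 2 * ρ + 3) ρ := by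
    refine ((((((hasDerivAt_pow 4 ρ).const_mul 2).add ((hasDerivAt_pow 3 ρ).const_mul 3)).add
      (hasDerivAt_pow 2 ρ)).add ((hasDerivAt_id ρ).const_mul 3)).sub_const 1).congr_deriv ?_
    push_cast
    ring
  have hden : HasDerivAt (fun x : ℝ => (1 + x) ^ 2 * (1 - x))
      (2 * (1 + ρ) * (1 - ρ) - (1 + ρ) ^ 2) ρ := by
    refine ((((hasDerivAt_id ρ).const_add 1).pow 2).mul
      ((hasDerivAt_id ρ).const_sub 1)).congr_deriv ?_
    simp only [id, Pi.pow_apply, Nat.cast_ofNat]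
    ring
  refine ((hnum.div hden (mul_ne_zero (pow_ne_zero 2 h₁) h₂)).add
    ((hasDerivAt_div_one_sub_add_log_one_sub hρ').const_mul (2 * k))).congr_deriv ?_
  ring

theorem deriv_G6_pos {k ρ : ℝ} (hk : 0 ≤ k) (hρ : ρ ∈ Ico 0 1) : 0 < deriv (G6 k) ρ := by
  obtain ⟨h₀, h₁⟩ := hρ
  rw [(hasDerivAt_G6 k (by linarith) h₁).deriv]
  have hnum : 4 ≤ -2 * ρ ^ 6 - 4 * ρ ^ 5 + 4 * ρ ^ 4 + 20 * ρ ^ 3 + 10 * ρ ^ 2 + 4 := by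
    have h63 : ρ ^ 6 ≤ ρ ^ 3 := pow_le_pow_of_le_one h₀ h₁.le (by norm_num)
    have h53 : ρ ^ 5 ≤ ρ ^ 3 := pow_le_pow_of_le_one h₀ h₁.le (by norm_num)
    nlinarith [pow_nonneg h₀ 2, pow_nonneg h₀ 3, pow_nonneg h₀ 4]
  have hden : 0 < ((1 + ρ) ^ 2 * (1 - ρ)) ^ 2 := by
    have : 0 < 1 - ρ := by linarith
    positivity
  have hlog : 0 ≤ 2 * k * (ρ / (1 - ρ) ^ 2) := by positivity
  have := div_pos (by linarith : (0 : ℝ) < -2 * ρ ^ 6 - 4 * ρ ^ 5 + 4 * ρ ^ 4 + 20 * ρ ^ 3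
    + 10 * ρ ^ 2 + 4) hden
  linarith

theorem strictMonoOn_G6 {k : ℝ} (hk : 0 ≤ k) : StrictMonoOn (G6 k) (Ico 0 1) := by
  have hcont : ContinuousOn (G6 k) (Ico 0 1) := fun ρ hρ =>
    (hasDerivAt_G6 k (by linarith [hρ.1]) hρ.2).continuousAt.continuousWithinAt
  refine strictMonoOn_of_deriv_pos (convex_Ico 0 1) hcont fun ρ hρ => deriv_G6_pos hk ?_
  rw [interior_Ico] at hρ
  exact Ioo_subset_Ico_self hρ

theorem G6_zero (k : ℝ) : G6 k 0 = -1 := by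
  simp [G6]

theorem G6_one_third_pos {k : ℝ} (hk : 0 ≤ k) : 0 < G6 k (1 / 3) := by
  have hlog := div_one_sub_add_log_one_sub_nonneg (show (1 / 3 : ℝ) < 1 by norm_num)
  have : 0 ≤ 2 * k * ((1 / 3 : ℝ) / (1 - 1 / 3) + log (1 - 1 / 3)) := by positivity
  rw [G6]
  norm_num at this ⊢
  linarith

theorem G6_root_general (k : ℝ) (hk0 : 0 ≤ k) :
    (fun ρ : ℝ => (2 * ρ ^ 4 + 3 * ρ ^ 3 + ρ ^ 2 + 3 * ρ - 1) / ((1 + ρ) ^ 2 * (1 - ρ))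
        + 2 * k * (ρ / (1 - ρ) + Real.log (1 - ρ))) 0 = -1 ∧
    0 < (fun ρ : ℝ => (2 * ρ ^ 4 + 3 * ρ ^ 3 + ρ ^ 2 + 3 * ρ - 1) / ((1 + ρ) ^ 2 * (1 - ρ))
        + 2 * k * (ρ / (1 - ρ) + Real.log (1 - ρ))) (1 / 3) ∧
    (∀ ρ ∈ Set.Icc (0:ℝ) (1 / 3),
      0 ≤ deriv (fun ρ : ℝ =>
        (2 * ρ ^ 4 + 3 * ρ ^ 3 + ρ ^ 2 + 3 * ρ - 1) / ((1 + ρ) ^ 2 * (1 - ρ))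
          + 2 * k * (ρ / (1 - ρ) + Real.log (1 - ρ))) ρ) ∧
    (∃! ρ₀ : ℝ, ρ₀ ∈ Set.Ioo 0 (1 / 3) ∧
      (2 * ρ₀ ^ 4 + 3 * ρ₀ ^ 3 + ρ₀ ^ 2 + 3 * ρ₀ - 1) / ((1 + ρ₀) ^ 2 * (1 - ρ₀))
        + 2 * k * (ρ₀ / (1 - ρ₀) + Real.log (1 - ρ₀)) = 0) := by
  have hsub : Icc (0 : ℝ) (1 / 3) ⊆ Ico 0 1 := Icc_subset_Ico_right (by norm_num)
  have hcont : ContinuousOn (G6 k) (Icc 0 (1 / 3)) := fun ρ hρ =>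
    (hasDerivAt_G6 k (by linarith [hρ.1]) (hsub hρ).2).continuousAt.continuousWithinAt
  have hsign : (0 : ℝ) ∈ Ioo (G6 k 0) (G6 k (1 / 3)) := by
    rw [G6_zero]
    exact ⟨by norm_num, G6_one_third_pos hk0⟩
  exact ⟨G6_zero k, G6_one_third_pos hk0, fun ρ hρ => (deriv_G6_pos hk0 (hsub hρ)).le,
    ((strictMonoOn_G6 hk0).mono hsub).existsUnique_mem_Ioo_eq (by norm_num) hcont hsign⟩

/-- The function `G₆(ρ) = (2ρ⁴+3ρ³+ρ²+3ρ-1)/((1+ρ)²(1-ρ)) + 2k(ρ/(1-ρ)+log(1-ρ))`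
satisfies `G₆(0) = -1 < 0`, `G₆(1/3) > 0`, `G₆' ≥ 0` on `[0,1/3]`, and has a
unique root in `(0, 1/3)`. -/
theorem G6_root (k : ℝ) (hk0 : 0 ≤ k) (hk1 : k < 1) :
    (fun ρ : ℝ => (2 * ρ ^ 4 + 3 * ρ ^ 3 + ρ ^ 2 + 3 * ρ - 1) / ((1 + ρ) ^ 2 * (1 - ρ))
        + 2 * k * (ρ / (1 - ρ) + Real.log (1 - ρ))) 0 = -1 ∧
    0 < (fun ρ : ℝ => (2 * ρ ^ 4 + 3 * ρ ^ 3 + ρ ^ 2 + 3 * ρ - 1) / ((1 + ρ) ^ 2 * (1 - ρ))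
        + 2 * k * (ρ / (1 - ρ) + Real.log (1 - ρ))) (1 / 3) ∧
    (∀ ρ ∈ Set.Icc (0:ℝ) (1 / 3),
      0 ≤ deriv (fun ρ : ℝ =>
        (2 * ρ ^ 4 + 3 * ρ ^ 3 + ρ ^ 2 + 3 * ρ - 1) / ((1 + ρ) ^ 2 * (1 - ρ))
          + 2 * k * (ρ / (1 - ρ) + Real.log (1 - ρ))) ρ) ∧
    (∃! ρ₀ : ℝ, ρ₀ ∈ Set.Ioo 0 (1 / 3) ∧
      (2 * ρ₀ ^ 4 + 3 * ρ₀ ^ 3 + ρ₀ ^ 2 + 3 * ρ₀ - 1) / ((1 + ρ₀) ^ 2 * (1 - ρ₀))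
        + 2 * k * (ρ₀ / (1 - ρ₀) + Real.log (1 - ρ₀)) = 0) :=
  G6_root_general k hk0
end

section
/- The function G_8(ρ) = 2ρ^4 + 3ρ^3 + ρ^2 + 3ρ - 1 + 2(1+ρ)^2(ρ + (1-ρ)log(1-ρ)) has a unique root ρ_0 in (0, 1/3), and ρ_0 ≈ 0.254876. -/
open Real Set

/-!
On `[0, 1)` the function `G₈` is a strictly increasing polynomial plus the product of the
positive increasing factor `2(1+ρ)²` and `ρ + (1-ρ) log(1-ρ)`, which vanishes at `0` and has
derivative `-log(1-ρ) ≥ 0`. So `G₈` is strictly increasing there, and a sign change between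
`0.254866` and `0.254886`, certified by the Taylor series of `log(1-x)` with its geometric
remainder bound, pins down the unique root.
-/

noncomputable def G8 (ρ : ℝ) : ℝ :=
  2 * ρ ^ 4 + 3 * ρ ^ 3 + ρ ^ 2 + 3 * ρ - 1 + 2 * (1 + ρ) ^ 2 * (ρ + (1 - ρ) * log (1 - ρ))

theorem StrictMonoOn.existsUnique_eq_and_mem_Ioo {α δ : Type*}
    [ConditionallyCompleteLinearOrder α] [TopologicalSpace α] [OrderTopology α] [DenselyOrdered α]
    [LinearOrder δ] [TopologicalSpace δ] [OrderClosedTopology δ] {f : α → δ} {s : Set α}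
    {a b : α} {c : δ} (hf : StrictMonoOn f s)
    (hab : a ≤ b) (hs : Icc a b ⊆ s) (hcont : ContinuousOn f (Icc a b)) (ha : f a < c)
    (hb : c < f b) : (∃! x, x ∈ s ∧ f x = c) ∧ ∀ x ∈ s, f x = c → x ∈ Ioo a b := by
  have has : a ∈ s := hs (left_mem_Icc.2 hab)
  have hbs : b ∈ s := hs (right_mem_Icc.2 hab)
  have hloc : ∀ x ∈ s, f x = c → x ∈ Ioo a b := fun x hx hfx =>
    ⟨(hf.lt_iff_lt has hx).1 (hfx ▸ ha), (hf.lt_iff_lt hx hbs).1 (hfx ▸ hb)⟩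
  obtain ⟨x, hx, hfx⟩ := intermediate_value_Icc hab hcont ⟨ha.le, hb.le⟩
  exact ⟨⟨x, ⟨hs hx, hfx⟩, fun y hy => hf.injOn hy.1 (hs hx) (hy.2.trans hfx.symm)⟩,
    hloc⟩

theorem hasDerivAt_self_add_one_sub_mul_log_one_sub {x : ℝ} (hx : x ≠ 1) :
    HasDerivAt (fun y => y + (1 - y) * log (1 - y)) (-log (1 - x)) x := by
  have hx' : 1 - x ≠ 0 := sub_ne_zero.2 hx.symm
  have hsub : HasDerivAt (fun y : ℝ => 1 - y) (-1) x := (hasDerivAt_id x).const_sub 1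
  refine ((hasDerivAt_id' x).add (hsub.mul (hsub.log hx'))).congr_deriv ?_
  field_simp
  ring

theorem monotoneOn_self_add_one_sub_mul_log_one_sub :
    MonotoneOn (fun y => y + (1 - y) * log (1 - y)) (Ico 0 1) := by
  have hderiv : ∀ x ∈ Ico (0 : ℝ) 1,
      HasDerivAt (fun y => y + (1 - y) * log (1 - y)) (-log (1 - x)) x :=
    fun x hx => hasDerivAt_self_add_one_sub_mul_log_one_sub hx.2.ne
  refine monotoneOn_of_deriv_nonneg (convex_Ico 0 1)
    (fun x hx => (hderiv x hx).continuousAt.continuousWithinAt)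
    (fun x hx => (hderiv x (interior_subset hx)).differentiableAt.differentiableWithinAt)
    fun x hx => ?_
  rw [interior_Ico] at hx
  rw [(hderiv x (Ioo_subset_Ico_self hx)).deriv, neg_nonneg]
  exact log_nonpos (by linarith [hx.2]) (by linarith [hx.1])

theorem self_add_one_sub_mul_log_one_sub_nonneg {x : ℝ} (hx : x ∈ Ico 0 1) :
    0 ≤ x + (1 - x) * log (1 - x) := by
  simpa using monotoneOn_self_add_one_sub_mul_log_one_sub (left_mem_Ico.2 one_pos) hx hx.1

theorem strictMonoOn_G8 : StrictMonoOn G8 (Ico 0 1) := by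
  have hpoly :
      StrictMonoOn (fun x : ℝ => 2 * x ^ 4 + 3 * x ^ 3 + x ^ 2 + 3 * x - 1) (Ico 0 1) := by
    intro x hx y hy hxy
    simp only
    nlinarith [pow_le_pow_left₀ hx.1 hxy.le 2, pow_le_pow_left₀ hx.1 hxy.le 3,
      pow_le_pow_left₀ hx.1 hxy.le 4]
  have hsq : MonotoneOn (fun x : ℝ => 2 * (1 + x) ^ 2) (Ico 0 1) := by
    intro x hx y hy hxy
    simp only
    nlinarith [hx.1]
  exact hpoly.add_monotone (hsq.mul monotoneOn_self_add_one_sub_mul_log_one_sub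
    (fun x _ => by positivity) fun x hx => self_add_one_sub_mul_log_one_sub_nonneg hx)

theorem continuousOn_G8 : ContinuousOn G8 (Iio 1) := by
  unfold G8
  fun_prop (disch := intro x hx; rw [mem_Iio] at hx; linarith)

theorem G8_neg : G8 0.254866 < 0 := by
  have h := abs_log_sub_add_sum_range_le (x := 0.254866) (by norm_num [abs_of_pos]) 9
  norm_num [abs_le, Finset.sum_range_succ] at h
  unfold G8
  norm_num
  linarith [h.1, h.2]

theorem G8_pos : 0 < G8 0.254886 := by
  have h := abs_log_sub_add_sum_range_le (x := 0.254886) (by norm_num [abs_of_pos]) 9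
  norm_num [abs_le, Finset.sum_range_succ] at h
  unfold G8
  norm_num
  linarith [h.1, h.2]

/-- The function `G₈(ρ) = 2ρ⁴+3ρ³+ρ²+3ρ-1 + 2(1+ρ)²(ρ+(1-ρ)log(1-ρ))` has a
unique root `ρ₀` in `(0, 1/3)`, and `ρ₀ ≈ 0.254876`. -/
theorem G8_root :
    (∃! ρ₀ : ℝ, ρ₀ ∈ Set.Ioo 0 (1 / 3) ∧
      2 * ρ₀ ^ 4 + 3 * ρ₀ ^ 3 + ρ₀ ^ 2 + 3 * ρ₀ - 1
        + 2 * (1 + ρ₀) ^ 2 * (ρ₀ + (1 - ρ₀) * Real.log (1 - ρ₀)) = 0) ∧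
    ∀ ρ₀ : ℝ, ρ₀ ∈ Set.Ioo 0 (1 / 3) →
      2 * ρ₀ ^ 4 + 3 * ρ₀ ^ 3 + ρ₀ ^ 2 + 3 * ρ₀ - 1
        + 2 * (1 + ρ₀) ^ 2 * (ρ₀ + (1 - ρ₀) * Real.log (1 - ρ₀)) = 0 →
      |ρ₀ - 0.254876| < 0.00001 := by
  have hmono : StrictMonoOn G8 (Ioo 0 (1 / 3)) :=
    strictMonoOn_G8.mono (Ioo_subset_Ico_self.trans (Ico_subset_Ico_right (by norm_num)))
  have hcont : ContinuousOn G8 (Icc 0.254866 0.254886) :=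
    continuousOn_G8.mono fun x hx => lt_of_le_of_lt hx.2 (by norm_num)
  obtain ⟨hunique, hloc⟩ := hmono.existsUnique_eq_and_mem_Ioo (by norm_num)
    (Icc_subset_Ioo (by norm_num) (by norm_num)) hcont G8_neg G8_pos
  refine ⟨hunique, fun ρ hρ hroot => ?_⟩
  obtain ⟨hlow, hupp⟩ := hloc ρ hρ hroot
  rw [abs_sub_lt_iff]
  constructor <;> linarith
end

section
/- For fixed p ∈ (1,2], the function G_3(a,ρ) = (1+ρ)^2 (a+ρ)^{p-1} / (1+aρ)^{p+1} is nondecreasing in ρ ∈ [0,1) for each fixed a ∈ [0,1); consequently G_3(a,ρ) ≥ a^{p-1}. -/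
/-- For `p ∈ (1,2]` and fixed `a ∈ [0,1)`, the function
`G₃(a,ρ) = (1+ρ)² (a+ρ)^(p-1) / (1+aρ)^(p+1)` is nondecreasing in `ρ ∈ [0,1)`;
consequently `G₃(a,ρ) ≥ a^(p-1)`. -/
theorem G3_monotone (p : ℝ) (hp1 : 1 < p) (hp2 : p ≤ 2)
    (a : ℝ) (ha0 : 0 ≤ a) (ha1 : a < 1) :
    MonotoneOn (fun ρ : ℝ => (1 + ρ) ^ 2 * (a + ρ) ^ (p - 1) / (1 + a * ρ) ^ (p + 1))
      (Set.Ico 0 1) ∧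
    ∀ ρ ∈ Set.Ico (0:ℝ) 1,
      a ^ (p - 1) ≤ (1 + ρ) ^ 2 * (a + ρ) ^ (p - 1) / (1 + a * ρ) ^ (p + 1) := by
  have key : ∀ ρ ∈ Set.Ico (0:ℝ) 1,
      (1 + ρ) ^ 2 * (a + ρ) ^ (p - 1) / (1 + a * ρ) ^ (p + 1)
        = ((1 + ρ) / (1 + a * ρ)) ^ 2 * ((a + ρ) / (1 + a * ρ)) ^ (p - 1) := by
    intro ρ hρ
    obtain ⟨h0, h1⟩ := hρ
    have hq : (0:ℝ) < 1 + a * ρ := by positivity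
    have hs : (0:ℝ) ≤ a + ρ := by positivity
    have hqne : ((1 + a * ρ) : ℝ) ^ (p - 1) ≠ 0 := by positivity
    rw [div_pow, Real.div_rpow hs hq.le, div_mul_div_comm,
      show p + 1 = 2 + (p - 1) by ring, Real.rpow_add hq, Real.rpow_two]
  have mono : MonotoneOn
      (fun ρ : ℝ => (1 + ρ) ^ 2 * (a + ρ) ^ (p - 1) / (1 + a * ρ) ^ (p + 1))
      (Set.Ico 0 1) := by
    intro x hx y hy hxy
    simp only
    rw [key x hx, key y hy]
    obtain ⟨hx0, hx1⟩ := hx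
    obtain ⟨hy0, hy1⟩ := hy
    have hqx : (0:ℝ) < 1 + a * x := by positivity
    have hqy : (0:ℝ) < 1 + a * y := by positivity
    have hu : (1 + x) / (1 + a * x) ≤ (1 + y) / (1 + a * y) := by
      rw [div_le_div_iff₀ hqx hqy]; nlinarith
    have hv : (a + x) / (1 + a * x) ≤ (a + y) / (1 + a * y) := by
      rw [div_le_div_iff₀ hqx hqy]
      nlinarith [mul_nonneg (sub_nonneg.2 hxy) (by nlinarith : (0:ℝ) ≤ 1 - a ^ 2)]
    have hu0 : 0 ≤ (1 + x) / (1 + a * x) := by positivity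
    have hv0 : 0 ≤ (a + x) / (1 + a * x) := by positivity
    apply mul_le_mul
    · exact pow_le_pow_left₀ hu0 hu 2
    · exact Real.rpow_le_rpow hv0 hv (by linarith)
    · exact Real.rpow_nonneg hv0 _
    · positivity
  refine ⟨mono, ?_⟩
  intro ρ hρ
  have h0 : (0:ℝ) ∈ Set.Ico (0:ℝ) 1 := ⟨le_refl _, one_pos⟩
  have := mono h0 hρ hρ.1
  simpa [Real.one_rpow] using this
end
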